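/- Let (β_j)_{j≥0} be a strictly decreasing sequence of reals with β₀ ≤ 1/2 and β_j → −∞, and let A₀ = {β_j : j ≥ 0}. Define Γ = { Σ_{p=1}^k β_{i_p} − 3l − (k−1)/2 : k ≥ 1 and l ≥ 0 integers, each β_{i_p} ∈ A₀ }. Then: (1) A₀ ⊆ Γ; (2) Γ is countable; (3) every element of Γ is ≤ β₀; (4) if γ₁, γ₂, γ₃ ∈ Γ then γ₁ + γ₂ + γ₃ − 1 ∈ Γ; (5) if γ ∈ Γ then γ − 3 ∈ Γ; (6) Γ is discrete, i.e., every point of Γ is an isolated point of Γ. -/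

import Mathlib

noncomputable section

open Set Filter

/-- The enlarged exponent set
`Γ = { Σ_{p=1}^k β_{i_p} - 3l - (k-1)/2 : k ≥ 1, l ≥ 0 }`. -/
def Gam (β : ℕ → ℝ) : Set ℝ :=
  {γ | ∃ k l : ℕ, 1 ≤ k ∧ ∃ i : Fin k → ℕ,
    γ = (∑ p : Fin k, β (i p)) - 3 * (l : ℝ) - ((k : ℝ) - 1) / 2}

/-- Rewrite the defining expression with each term shifted by `1/2`. -/
lemma Gam_shift {k : ℕ} (β : ℕ → ℝ) (i : Fin k → ℕ) (l : ℕ) :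
    (∑ p : Fin k, β (i p)) - 3 * (l : ℝ) - ((k : ℝ) - 1) / 2
      = (∑ p : Fin k, (β (i p) - 1/2)) + (1/2 - 3 * (l : ℝ)) := by
  rw [Finset.sum_sub_distrib, Finset.sum_const, Finset.card_univ, Fintype.card_fin,
    nsmul_eq_mul]
  ring

/-- The part of `Γ` above any level `c` is finite. -/
lemma Gam_inter_finite (β : ℕ → ℝ) (hmono : StrictAnti β) (hβ0 : β 0 ≤ 1 / 2)
    (htend : Tendsto β atTop atBot) (c : ℝ) :
    {γ | γ ∈ Gam β ∧ c ≤ γ}.Finite := by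
  obtain ⟨N, hN⟩ : ∃ N : ℕ, ∀ j ≥ N, β j ≤ c - 1 := by
    have := (tendsto_atBot.mp htend (c - 1))
    exact eventually_atTop.mp this
  set B : Fin N → ℕ := fun j => if β (j : ℕ) = 1/2 then 0
    else ⌈(1/2 - c) / (1/2 - β (j : ℕ))⌉₊ with hB
  set L : ℕ := ⌈(1/2 - c) / 3⌉₊ with hL
  set φ : (Fin N → ℕ) × ℕ → ℝ := fun nl =>
    (∑ j : Fin N, (nl.1 j : ℝ) * (β (j : ℕ) - 1/2)) + (1/2 - 3 * (nl.2 : ℝ)) with hφ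
  have hfinT : ((Set.univ.pi fun j : Fin N => Set.Iic (B j)) ×ˢ Set.Iic L).Finite :=
    (Set.Finite.pi fun j => Set.finite_Iic _).prod (Set.finite_Iic L)
  refine Set.Finite.subset (hfinT.image φ) ?_
  rintro γ ⟨⟨k, l, hk, i, hγ⟩, hcγ⟩
  rw [Gam_shift] at hγ
  have hle12 : ∀ p : Fin k, β (i p) ≤ 1/2 :=
    fun p => le_trans (hmono.antitone (Nat.zero_le _)) hβ0
  have hnonpos : ∀ p : Fin k, β (i p) - 1/2 ≤ 0 := fun p => by linarith [hle12 p]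
  have hsum_nonpos : ∀ s : Finset (Fin k), (∑ p ∈ s, (β (i p) - 1/2)) ≤ 0 :=
    fun s => Finset.sum_nonpos (fun p _ => hnonpos p)
  have hl0 : (0 : ℝ) ≤ 3 * (l : ℝ) := by positivity
  -- each term is at least c
  have hterm : ∀ p : Fin k, c ≤ β (i p) := by
    intro p
    have hsplit := Finset.add_sum_erase Finset.univ (fun p => β (i p) - 1/2)
      (Finset.mem_univ p)
    have h1 : (∑ q ∈ Finset.univ.erase p, (β (i q) - 1/2)) ≤ 0 :=
      hsum_nonpos _
    have : γ = (β (i p) - 1/2) + (∑ q ∈ Finset.univ.erase p, (β (i q) - 1/2))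
        + (1/2 - 3 * (l : ℝ)) := by rw [hγ, ← hsplit]
    linarith
  have hiN : ∀ p : Fin k, i p < N := by
    intro p
    by_contra h
    have := hN (i p) (le_of_not_gt h)
    linarith [hterm p]
  set i' : Fin k → Fin N := fun p => ⟨i p, hiN p⟩ with hi'
  set n : Fin N → ℕ := fun j => if β (j : ℕ) = 1/2 then 0
    else (Finset.univ.filter (fun p => i' p = j)).card with hn
  -- fiber sums
  have hfib : ∀ j : Fin N,
      (∑ p ∈ Finset.univ.filter (fun p => i' p = j), (β (i p) - 1/2))
        = ((Finset.univ.filter (fun p => i' p = j)).card : ℝ) * (β (j : ℕ) - 1/2) := by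
    intro j
    rw [Finset.sum_congr rfl (fun p hp => ?_), Finset.sum_const, nsmul_eq_mul]
    have : i' p = j := (Finset.mem_filter.mp hp).2
    rw [show i p = (j : ℕ) from congrArg Fin.val this]
  have hkey : (∑ p : Fin k, (β (i p) - 1/2))
      = ∑ j : Fin N, (n j : ℝ) * (β (j : ℕ) - 1/2) := by
    rw [← Finset.sum_fiberwise Finset.univ i' (fun p => β (i p) - 1/2)]
    refine Finset.sum_congr rfl (fun j _ => ?_)
    rw [hfib j]
    by_cases h : β (j : ℕ) = 1/2
    · simp only [hn, if_pos h, h]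
      ring
    · simp only [hn, if_neg h]
  have hγφ : γ = φ (n, l) := by rw [hγ, hkey]
  refine ⟨(n, l), ⟨?_, ?_⟩, hγφ.symm⟩
  · -- n j ≤ B j
    intro j _
    simp only [Set.mem_Iic]
    by_cases h : β (j : ℕ) = 1/2
    · simp [hn, hB, h]
    · have hjle : β (j : ℕ) ≤ 1/2 := le_trans (hmono.antitone (Nat.zero_le _)) hβ0
      have hjlt : 0 < 1/2 - β (j : ℕ) := by
        rcases lt_or_eq_of_le hjle with h' | h'
        · linarith
        · exact absurd h' h
      -- fiber sum bound
      have hsplit := Finset.sum_filter_add_sum_filter_not Finset.univ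
        (fun p => i' p = j) (fun p => β (i p) - 1/2)
      have h2 : (∑ p ∈ Finset.univ.filter (fun p => ¬ i' p = j), (β (i p) - 1/2)) ≤ 0 :=
        hsum_nonpos _
      have h3 : c - 1/2 ≤ (∑ p : Fin k, (β (i p) - 1/2)) := by
        have : γ = (∑ p : Fin k, (β (i p) - 1/2)) + (1/2 - 3 * (l : ℝ)) := hγ
        linarith
      have h4 : c - 1/2 ≤
          ((Finset.univ.filter (fun p => i' p = j)).card : ℝ) * (β (j : ℕ) - 1/2) := by
        rw [← hfib j]; linarith
      have h5 : ((Finset.univ.filter (fun p => i' p = j)).card : ℝ)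
          ≤ (1/2 - c) / (1/2 - β (j : ℕ)) := by
        rw [le_div_iff₀ hjlt]
        nlinarith
      have h6 : ((Finset.univ.filter (fun p => i' p = j)).card : ℝ)
          ≤ (⌈(1/2 - c) / (1/2 - β (j : ℕ))⌉₊ : ℝ) :=
        le_trans h5 (Nat.le_ceil _)
      simp only [hn, hB, h, if_false]
      exact_mod_cast h6
  · -- l ≤ L
    simp only [Set.mem_Iic]
    have h3 : 3 * (l : ℝ) ≤ 1/2 - c := by
      have := hsum_nonpos Finset.univ
      have : γ = (∑ p : Fin k, (β (i p) - 1/2)) + (1/2 - 3 * (l : ℝ)) := hγ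
      linarith [hsum_nonpos Finset.univ]
    have : (l : ℝ) ≤ (1/2 - c) / 3 := by linarith
    have := le_trans this (Nat.le_ceil _)
    exact_mod_cast this

/-- **Lemma 6.1.**  For a strictly decreasing sequence `β` with `β₀ ≤ 1/2` and `β_j → -∞`, the
set `Γ` contains `A₀ = {β_j}`, is countable, is bounded above by `β₀`, is closed under
`(γ₁,γ₂,γ₃) ↦ γ₁+γ₂+γ₃-1` and `γ ↦ γ-3`, and is discrete. -/
theorem Gamma_properties
    (β : ℕ → ℝ) (hmono : StrictAnti β) (hβ0 : β 0 ≤ 1 / 2)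
    (htend : Tendsto β atTop atBot) :
    (∀ j : ℕ, β j ∈ Gam β) ∧
    (Gam β).Countable ∧
    (∀ γ ∈ Gam β, γ ≤ β 0) ∧
    (∀ γ₁ ∈ Gam β, ∀ γ₂ ∈ Gam β, ∀ γ₃ ∈ Gam β, γ₁ + γ₂ + γ₃ - 1 ∈ Gam β) ∧
    (∀ γ ∈ Gam β, γ - 3 ∈ Gam β) ∧
    (∀ γ ∈ Gam β, ∃ ε > (0 : ℝ), ∀ δ ∈ Gam β, |δ - γ| < ε → δ = γ) := by
  refine ⟨?_, ?_, ?_, ?_, ?_, ?_⟩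
  · -- A₀ ⊆ Γ
    intro j
    exact ⟨1, 0, le_refl 1, fun _ => j, by norm_num⟩
  · -- countable
    have hsub : Gam β ⊆ ⋃ (k : ℕ), ⋃ (l : ℕ),
        Set.range (fun i : Fin k → ℕ =>
          (∑ p : Fin k, β (i p)) - 3 * (l : ℝ) - ((k : ℝ) - 1) / 2) := by
      rintro γ ⟨k, l, _, i, hγ⟩
      exact Set.mem_iUnion.mpr ⟨k, Set.mem_iUnion.mpr ⟨l, ⟨i, hγ.symm⟩⟩⟩
    exact Set.Countable.mono hsub
      (Set.countable_iUnion fun k => Set.countable_iUnion fun l => Set.countable_range _)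
  · -- bounded above by β 0
    rintro γ ⟨k, l, hk, i, hγ⟩
    rw [Gam_shift] at hγ
    have hk' : 0 < k := hk
    set p₀ : Fin k := ⟨0, hk'⟩ with hp₀
    have hle12 : ∀ p : Fin k, β (i p) ≤ 1/2 :=
      fun p => le_trans (hmono.antitone (Nat.zero_le _)) hβ0
    have hsplit := Finset.add_sum_erase Finset.univ (fun p => β (i p) - 1/2)
      (Finset.mem_univ p₀)
    have h1 : (∑ q ∈ Finset.univ.erase p₀, (β (i q) - 1/2)) ≤ 0 :=
      Finset.sum_nonpos (fun p _ => by linarith [hle12 p])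
    have h2 : γ = (β (i p₀) - 1/2) + (∑ q ∈ Finset.univ.erase p₀, (β (i q) - 1/2))
        + (1/2 - 3 * (l : ℝ)) := by rw [hγ, ← hsplit]
    have h3 : β (i p₀) ≤ β 0 := hmono.antitone (Nat.zero_le _)
    have hl0 : (0 : ℝ) ≤ 3 * (l : ℝ) := by positivity
    linarith
  · -- closed under γ₁+γ₂+γ₃-1
    rintro γ₁ ⟨k₁, l₁, hk₁, i₁, h₁⟩ γ₂ ⟨k₂, l₂, hk₂, i₂, h₂⟩ γ₃ ⟨k₃, l₃, hk₃, i₃, h₃⟩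
    refine ⟨k₁ + k₂ + k₃, l₁ + l₂ + l₃, by omega,
      Fin.append (Fin.append i₁ i₂) i₃, ?_⟩
    rw [Fin.sum_univ_add, Fin.sum_univ_add]
    simp only [Fin.append_left, Fin.append_right]
    rw [h₁, h₂, h₃]
    push_cast
    ring
  · -- closed under γ - 3
    rintro γ ⟨k, l, hk, i, hγ⟩
    refine ⟨k, l + 1, hk, i, ?_⟩
    rw [hγ]
    push_cast
    ring
  · -- discrete
    intro γ hγ
    have hfin : ({δ | δ ∈ Gam β ∧ γ - 1 ≤ δ} \ {γ}).Finite :=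
      (Gam_inter_finite β hmono hβ0 htend (γ - 1)).diff
    have hclosed : IsClosed ({δ | δ ∈ Gam β ∧ γ - 1 ≤ δ} \ {γ}) := hfin.isClosed
    have hγnot : γ ∈ ({δ | δ ∈ Gam β ∧ γ - 1 ≤ δ} \ {γ})ᶜ := by
      simp [Set.mem_diff]
    obtain ⟨ε, hε, hball⟩ := Metric.isOpen_iff.mp hclosed.isOpen_compl γ hγnot
    refine ⟨min ε 1, lt_min hε one_pos, ?_⟩
    intro δ hδ hdist
    by_contra hne
    have h1 : |δ - γ| < ε := lt_of_lt_of_le hdist (min_le_left _ _)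
    have h2 : |δ - γ| < 1 := lt_of_lt_of_le hdist (min_le_right _ _)
    have hge : γ - 1 ≤ δ := by
      have := abs_lt.mp h2
      linarith [this.1]
    have hmem : δ ∈ {δ | δ ∈ Gam β ∧ γ - 1 ≤ δ} \ {γ} := ⟨⟨hδ, hge⟩, hne⟩
    have : δ ∈ Metric.ball γ ε := by
      rw [Metric.mem_ball, Real.dist_eq]
      exact h1
    exact (hball this) hmem
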